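/- arXiv:2506.19313 — 3 statements merged into one kernel-verified Lean document; each statement's English description precedes it below -/
import Mathlib

section
/- With w(x) = w₀(β(x)) as above, the second derivative satisfies w''(x) = (2/9) x^{-5/3} + O(x^{-4/3}) and the third derivative satisfies w'''(x) = O(x^{-8/3}) as x → 0⁺. -/
/-!
Where `η' > 0`, the inverse `β` of `η` is differentiable with `β' = 1 / η' ∘ β`, so
`w'' = (w₀''η' - w₀'η'') / η'³ ∘ β` and `w'''` is a similar quotient with denominator `η'⁵`.
Taylor expansion at `0` gives `η' = 3t² + O(t³)`, `η'' = 6t + O(t²)` and `w₀' = -1 + O(t)`.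
Substituting these, the first quotient is `(2/9) t⁻⁵ + O(t⁻⁴)` and the second is `O(t⁻⁸)`
as `t → 0⁺`. Finally `β(s³) = s + O(s²)`, so `β(x)ᵏ = x^{k/3} + O(x^{(k+1)/3})`, and this turns
powers of `t = β(x)` into the stated powers of `x`.
-/

open Set Filter Topology Asymptotics

section RightNhdsZero

variable {f g : ℝ → ℝ}

lemma isBigO_zpow_of_le_nhdsGT {m n : ℤ} (h : n ≤ m) :
    (fun t : ℝ => t ^ m) =O[𝓝[>] 0] (fun t => t ^ n) := by
  refine IsBigO.of_bound 1 ?_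
  filter_upwards [Ioo_mem_nhdsGT one_pos] with t ht
  rw [one_mul, Real.norm_of_nonneg (zpow_nonneg ht.1.le _),
    Real.norm_of_nonneg (zpow_nonneg ht.1.le _)]
  exact zpow_le_zpow_right_of_le_one₀ ht.1 ht.2.le h

lemma Asymptotics.IsBigO.zpow_of_le {m n : ℤ} (hf : f =O[𝓝[>] 0] (· ^ m)) (h : n ≤ m) :
    f =O[𝓝[>] 0] (· ^ n) :=
  hf.trans (isBigO_zpow_of_le_nhdsGT h)

lemma Asymptotics.IsBigO.mul_zpow {m n k : ℤ} (hf : f =O[𝓝[>] 0] (· ^ m))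
    (hg : g =O[𝓝[>] 0] (· ^ n)) (h : k ≤ m + n) :
    (fun t => f t * g t) =O[𝓝[>] 0] (· ^ k) := by
  refine ((hf.mul hg).congr' EventuallyEq.rfl ?_).zpow_of_le h
  filter_upwards [self_mem_nhdsWithin] with t (ht : 0 < t)
  exact (zpow_add₀ ht.ne' m n).symm

lemma Asymptotics.IsBigO.zpow_natCast {n : ℕ} (hf : f =O[𝓝[>] 0] (fun t => t ^ n)) :
    f =O[𝓝[>] 0] (· ^ (n : ℤ)) :=
  hf.congr_right fun t => (_root_.zpow_natCast t n).symm

lemma Asymptotics.IsBigO.zpow_zero (hf : f =O[𝓝[>] 0] (fun _ => (1 : ℝ))) :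
    f =O[𝓝[>] 0] (· ^ (0 : ℤ)) :=
  hf.congr_right fun t => (_root_.zpow_zero t).symm

lemma eventually_half_mul_pow_le_of_sub_isBigO {c : ℝ} (hc : 0 < c) {n : ℕ}
    (h : (fun t => f t - c * t ^ n) =O[𝓝[>] 0] (fun t => t ^ (n + 1))) :
    ∀ᶠ t in 𝓝[>] 0, c / 2 * t ^ n ≤ f t := by
  have ho := h.trans_isLittleO ((isLittleO_pow_pow n.lt_succ_self).mono nhdsWithin_le_nhds)
  filter_upwards [ho.def (half_pos hc), self_mem_nhdsWithin] with t ht (ht0 : 0 < t)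
  rw [Real.norm_eq_abs, Real.norm_of_nonneg (pow_nonneg ht0.le n)] at ht
  linarith [(abs_le.mp ht).1]

lemma isBigO_pow_of_sub_isBigO {c : ℝ} {n : ℕ}
    (h : (fun t => f t - c * t ^ n) =O[𝓝[>] 0] (fun t => t ^ (n + 1))) :
    f =O[𝓝[>] 0] (fun t => t ^ n) := by
  have h1 := h.trans ((isLittleO_pow_pow n.lt_succ_self).mono nhdsWithin_le_nhds).isBigO
  simpa using h1.add ((isBigO_refl (fun t : ℝ => t ^ n) _).const_mul_left c)

lemma isBigO_inv_of_eventually_le {c : ℝ} (hc : 0 < c) {n : ℕ}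
    (h : ∀ᶠ t in 𝓝[>] 0, c * t ^ n ≤ f t) :
    (fun t => (f t)⁻¹) =O[𝓝[>] 0] (· ^ (-(n : ℤ))) := by
  refine IsBigO.of_bound c⁻¹ ?_
  filter_upwards [h, self_mem_nhdsWithin] with t ht (ht0 : 0 < t)
  have hpos : 0 < c * t ^ n := by positivity
  rw [norm_inv, Real.norm_of_nonneg (hpos.le.trans ht), zpow_neg, zpow_natCast, norm_inv,
    Real.norm_of_nonneg (by positivity), ← mul_inv]
  exact inv_anti₀ hpos ht

lemma isBigO_inv_pow_of_sub_isBigO {c : ℝ} (hc : 0 < c) {n : ℕ}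
    (h : (fun t => f t - c * t ^ n) =O[𝓝[>] 0] (fun t => t ^ (n + 1))) (k : ℕ) :
    (fun t => (f t ^ k)⁻¹) =O[𝓝[>] 0] (· ^ (-((n * k : ℕ) : ℤ))) := by
  refine isBigO_inv_of_eventually_le (pow_pos (half_pos hc) k) ?_
  filter_upwards [eventually_half_mul_pow_le_of_sub_isBigO hc h, self_mem_nhdsWithin]
    with t ht (ht0 : 0 < t)
  rw [pow_mul, ← mul_pow]
  exact pow_le_pow_left₀ (by positivity) ht k

lemma isBigO_pow_succ_of_hasDerivAt {g' : ℝ → ℝ} {k : ℕ} (hg0 : g 0 = 0)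
    (hd : ∀ᶠ t in 𝓝 0, HasDerivAt g (g' t) t) (hg' : g' =O[𝓝[>] 0] (fun t => t ^ k)) :
    g =O[𝓝[>] 0] (fun t => t ^ (k + 1)) := by
  obtain ⟨C, hC0, hC⟩ := hg'.exists_nonneg
  obtain ⟨ε₁, hε₁, hd⟩ := Metric.eventually_nhds_iff.mp hd
  obtain ⟨ε₂, hε₂, hC⟩ := mem_nhdsGT_iff_exists_Ioo_subset.mp hC.bound
  refine IsBigO.of_bound C ?_
  filter_upwards [Ioo_mem_nhdsGT (lt_min hε₁ hε₂)] with t ⟨ht0, ht⟩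
  have hder : ∀ x ∈ Icc 0 t, HasDerivAt g (g' x) x := fun x hx => hd <| by
    rw [Real.dist_eq, sub_zero, abs_of_nonneg hx.1]
    exact hx.2.trans_lt (ht.trans_le (min_le_left _ _))
  obtain ⟨ξ, hξ, hslope⟩ := exists_hasDerivAt_eq_slope g g' ht0
    (fun x hx => (hder x hx).continuousAt.continuousWithinAt)
    (fun x hx => hder x (Ioo_subset_Icc_self hx))
  have hξC : ‖g' ξ‖ ≤ C * ‖ξ ^ k‖ := hC ⟨hξ.1, hξ.2.trans (ht.trans_le (min_le_right _ _))⟩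
  rw [hg0, sub_zero, sub_zero, eq_div_iff ht0.ne'] at hslope
  rw [norm_pow, Real.norm_of_nonneg hξ.1.le] at hξC
  rw [← hslope, norm_mul, norm_pow, Real.norm_of_nonneg ht0.le, pow_succ, ← mul_assoc]
  gcongr
  exact hξC.trans (mul_le_mul_of_nonneg_left (pow_le_pow_left₀ hξ.1.le hξ.2.le k) hC0)

end RightNhdsZero

section IteratedDeriv

variable {f : ℝ → ℝ} {U : Set ℝ}

lemma ContDiffOn.hasDerivAt_iteratedDeriv {n k : ℕ} (hf : ContDiffOn ℝ n f U) (hU : IsOpen U)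
    (hk : k < n) {t : ℝ} (ht : t ∈ U) :
    HasDerivAt (iteratedDeriv k f) (iteratedDeriv (k + 1) f t) t := by
  have hd := ((hf.differentiableOn_iteratedDerivWithin (by exact_mod_cast hk) hU.uniqueDiffOn)
    t ht).differentiableAt (hU.mem_nhds ht)
  rw [iteratedDeriv_succ]
  exact (hd.congr_of_eventuallyEq
    ((iteratedDerivWithin_of_isOpen hU).symm.eventuallyEq_of_mem (hU.mem_nhds ht))).hasDerivAt

lemma ContDiffOn.continuousAt_iteratedDeriv {n k : ℕ} (hf : ContDiffOn ℝ n f U) (hU : IsOpen U)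
    (hk : k ≤ n) {t : ℝ} (ht : t ∈ U) : ContinuousAt (iteratedDeriv k f) t :=
  ((hf.continuousOn_iteratedDerivWithin (by exact_mod_cast hk) hU.uniqueDiffOn).continuousAt
    (hU.mem_nhds ht)).congr
      ((iteratedDerivWithin_of_isOpen hU).eventuallyEq_of_mem (hU.mem_nhds ht))

lemma ContDiffOn.isBigO_one_iteratedDeriv {n k : ℕ} (hf : ContDiffOn ℝ n f U) (hU : IsOpen U)
    (h0 : (0 : ℝ) ∈ U) (hk : k ≤ n) : iteratedDeriv k f =O[𝓝[>] 0] (fun _ => (1 : ℝ)) :=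
  ((hf.continuousAt_iteratedDeriv hU hk h0).tendsto.isBigO_one ℝ).mono nhdsWithin_le_nhds

lemma ContDiffOn.isBigO_iteratedDeriv_sub {n k : ℕ} (hf : ContDiffOn ℝ n f U) (hU : IsOpen U)
    (h0 : (0 : ℝ) ∈ U) (hk : k < n) :
    (fun t => iteratedDeriv k f t - iteratedDeriv k f 0) =O[𝓝[>] 0] (fun t => t) := by
  simpa using ((hf.hasDerivAt_iteratedDeriv hU hk h0).differentiableAt.isBigO_sub).mono
    nhdsWithin_le_nhds

lemma isBigO_iteratedDeriv_sub_of_cubic (hf : ContDiffOn ℝ 4 f U) (hU : IsOpen U)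
    (h0 : (0 : ℝ) ∈ U) (h1 : iteratedDeriv 1 f 0 = 0) (h2 : iteratedDeriv 2 f 0 = 0)
    (h3 : iteratedDeriv 3 f 0 = 6) :
    (fun t => iteratedDeriv 1 f t - 3 * t ^ 2) =O[𝓝[>] 0] (fun t => t ^ 3) ∧
      (fun t => iteratedDeriv 2 f t - 6 * t) =O[𝓝[>] 0] (fun t => t ^ 2) := by
  have hd : ∀ k < 4, ∀ᶠ t in 𝓝 0, HasDerivAt (iteratedDeriv k f) (iteratedDeriv (k + 1) f t) t :=
    fun k hk => eventually_of_mem (hU.mem_nhds h0) fun t ht => hf.hasDerivAt_iteratedDeriv hU hk ht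
  have hR : (fun t => iteratedDeriv 3 f t - 6) =O[𝓝[>] 0] (fun t => t ^ 1) := by
    simpa [h3] using hf.isBigO_iteratedDeriv_sub hU h0 (k := 3) (by norm_num)
  have hQ : (fun t => iteratedDeriv 2 f t - 6 * t) =O[𝓝[>] 0] (fun t => t ^ (1 + 1)) := by
    refine isBigO_pow_succ_of_hasDerivAt (by simp [h2]) ?_ hR
    filter_upwards [hd 2 (by norm_num)] with t ht
    exact (ht.sub ((hasDerivAt_id t).const_mul 6)).congr_deriv (by simp)
  refine ⟨isBigO_pow_succ_of_hasDerivAt (by simp [h1]) ?_ hQ, hQ⟩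
  filter_upwards [hd 1 (by norm_num)] with t ht
  exact (ht.sub ((hasDerivAt_pow 2 t).const_mul 3)).congr_deriv (by ring)

lemma Set.EqOn.iteratedDeriv_succ_of_hasDerivAt {g g' : ℝ → ℝ} {n : ℕ} (hU : IsOpen U)
    (h : EqOn (iteratedDeriv n f) g U) (hg : ∀ x ∈ U, HasDerivAt g (g' x) x) :
    EqOn (iteratedDeriv (n + 1) f) g' U := fun x hx => by
  rw [iteratedDeriv_succ, (h.eventuallyEq_of_mem (hU.mem_nhds hx)).deriv_eq]
  exact (hg x hx).deriv

end IteratedDeriv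

section InverseFunction

/-- `compInvDeriv₂ w η t` and `compInvDeriv₃ w η t` are the second and third derivatives of
`w ∘ η⁻¹` at the point `η t`. -/
noncomputable def compInvDeriv₂ (w η : ℝ → ℝ) (t : ℝ) : ℝ :=
  (iteratedDeriv 2 w t * iteratedDeriv 1 η t - iteratedDeriv 1 w t * iteratedDeriv 2 η t)
    / iteratedDeriv 1 η t ^ 3

noncomputable def compInvDeriv₃ (w η : ℝ → ℝ) (t : ℝ) : ℝ :=
  ((iteratedDeriv 3 w t * iteratedDeriv 1 η t - iteratedDeriv 1 w t * iteratedDeriv 3 η t)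
      * iteratedDeriv 1 η t
    - 3 * (iteratedDeriv 2 w t * iteratedDeriv 1 η t
      - iteratedDeriv 1 w t * iteratedDeriv 2 η t) * iteratedDeriv 2 η t)
    / iteratedDeriv 1 η t ^ 5

variable {w η β : ℝ → ℝ} {U V : Set ℝ}

lemma continuousAt_of_leftInvOn_of_strictMonoOn {a b x : ℝ} (hη : StrictMonoOn η (Icc a b))
    (hU : U ∈ 𝓝 x) (hinv : ∀ y ∈ U, η (β y) = y) (hβ : ∀ y ∈ U, β y ∈ Ioo a b) :
    ContinuousAt β x := by
  have hx := mem_of_mem_nhds hU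
  have mem : ∀ y ∈ U, β y ∈ Icc a b := fun y hy => Ioo_subset_Icc_self (hβ y hy)
  obtain ⟨hax, hxb⟩ := hβ x hx
  refine tendsto_order.2 ⟨fun c hc => ?_, fun c hc => ?_⟩
  · have hc' : max c a ∈ Icc a b := ⟨le_max_right _ _, (max_lt hc hax).le.trans hxb.le⟩
    have hlt : η (max c a) < x := hinv x hx ▸ hη hc' (mem x hx) (max_lt hc hax)
    filter_upwards [hU, eventually_gt_nhds hlt] with y hy hy'
    rw [← hinv y hy] at hy'
    exact (le_max_left c a).trans_lt ((hη.lt_iff_lt hc' (mem y hy)).mp hy')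
  · have hc' : min c b ∈ Icc a b := ⟨hax.le.trans (lt_min hc hxb).le, min_le_right _ _⟩
    have hlt : x < η (min c b) := hinv x hx ▸ hη (mem x hx) hc' (lt_min hc hxb)
    filter_upwards [hU, eventually_lt_nhds hlt] with y hy hy'
    rw [← hinv y hy] at hy'
    exact ((hη.lt_iff_lt (mem y hy) hc').mp hy').trans_le (min_le_left c b)

lemma hasDerivAt_deriv_div_deriv (hV : IsOpen V) (hw : ContDiffOn ℝ 3 w V)
    (hη : ContDiffOn ℝ 3 η V) {t : ℝ} (ht : t ∈ V) (hη1 : iteratedDeriv 1 η t ≠ 0) :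
    HasDerivAt (fun s => iteratedDeriv 1 w s / iteratedDeriv 1 η s)
      (compInvDeriv₂ w η t * iteratedDeriv 1 η t) t := by
  refine ((hw.hasDerivAt_iteratedDeriv hV (by norm_num) ht).div
    (hη.hasDerivAt_iteratedDeriv hV (by norm_num) ht) hη1).congr_deriv ?_
  unfold compInvDeriv₂
  field_simp

lemma hasDerivAt_compInvDeriv₂ (hV : IsOpen V) (hw : ContDiffOn ℝ 3 w V)
    (hη : ContDiffOn ℝ 3 η V) {t : ℝ} (ht : t ∈ V) (hη1 : iteratedDeriv 1 η t ≠ 0) :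
    HasDerivAt (compInvDeriv₂ w η) (compInvDeriv₃ w η t * iteratedDeriv 1 η t) t := by
  have hw1 := hw.hasDerivAt_iteratedDeriv hV (k := 1) (by norm_num) ht
  have hw2 := hw.hasDerivAt_iteratedDeriv hV (k := 2) (by norm_num) ht
  have hη1' := hη.hasDerivAt_iteratedDeriv hV (k := 1) (by norm_num) ht
  have hη2 := hη.hasDerivAt_iteratedDeriv hV (k := 2) (by norm_num) ht
  refine (((hw2.mul hη1').sub (hw1.mul hη2)).div (hη1'.pow 3) (pow_ne_zero 3 hη1)).congr_deriv ?_
  simp only [compInvDeriv₃, Pi.pow_apply, Pi.mul_apply, Pi.sub_apply]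
  field_simp
  ring

lemma iteratedDeriv_comp_eqOn_compInvDeriv {a b : ℝ} (hV : IsOpen V)
    (hw : ContDiffOn ℝ 3 w V) (hη : ContDiffOn ℝ 3 η V) (habV : Icc a b ⊆ V)
    (hη1 : ∀ t ∈ Ioo a b, 0 < iteratedDeriv 1 η t) (hU : IsOpen U)
    (hinv : ∀ x ∈ U, η (β x) = x) (hβ : ∀ x ∈ U, β x ∈ Ioo a b) :
    EqOn (iteratedDeriv 2 (fun y => w (β y))) (fun x => compInvDeriv₂ w η (β x)) U ∧
      EqOn (iteratedDeriv 3 (fun y => w (β y))) (fun x => compInvDeriv₃ w η (β x)) U := by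
  have hmono : StrictMonoOn η (Icc a b) := by
    refine strictMonoOn_of_deriv_pos (convex_Icc a b) (hη.continuousOn.mono habV) fun t ht => ?_
    rw [interior_Icc] at ht
    exact iteratedDeriv_one (f := η) ▸ hη1 t ht
  have hβV : ∀ x ∈ U, β x ∈ V := fun x hx => habV (Ioo_subset_Icc_self (hβ x hx))
  have hne : ∀ x ∈ U, iteratedDeriv 1 η (β x) ≠ 0 := fun x hx => (hη1 _ (hβ x hx)).ne'
  have hβd : ∀ x ∈ U, HasDerivAt β (iteratedDeriv 1 η (β x))⁻¹ x := fun x hx =>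
    HasDerivAt.of_local_left_inverse
      (continuousAt_of_leftInvOn_of_strictMonoOn hmono (hU.mem_nhds hx) hinv hβ)
      (by simpa using hη.hasDerivAt_iteratedDeriv hV (k := 0) (by norm_num) (hβV x hx))
      (hne x hx) (eventually_of_mem (hU.mem_nhds hx) hinv)
  have hcomp : ∀ {F G : ℝ → ℝ},
      (∀ x ∈ U, HasDerivAt F (G (β x) * iteratedDeriv 1 η (β x)) (β x)) →
      ∀ x ∈ U, HasDerivAt (fun y => F (β y)) (G (β x)) x := fun hF x hx =>
    ((hF x hx).comp x (hβd x hx)).congr_deriv (mul_inv_cancel_right₀ (hne x hx) _)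
  have h1 : EqOn (iteratedDeriv 1 (fun y => w (β y)))
      (fun x => iteratedDeriv 1 w (β x) / iteratedDeriv 1 η (β x)) U :=
    EqOn.iteratedDeriv_succ_of_hasDerivAt (n := 0) hU (fun x _ => by simp) <|
      hcomp (F := w) (G := fun t => iteratedDeriv 1 w t / iteratedDeriv 1 η t) fun x hx => by
        rw [div_mul_cancel₀ _ (hne x hx)]
        simpa using hw.hasDerivAt_iteratedDeriv hV (k := 0) (by norm_num) (hβV x hx)
  have h2 := h1.iteratedDeriv_succ_of_hasDerivAt hU <| hcomp fun x hx =>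
    hasDerivAt_deriv_div_deriv hV hw hη (hβV x hx) (hne x hx)
  exact ⟨h2, h2.iteratedDeriv_succ_of_hasDerivAt hU <| hcomp fun x hx =>
    hasDerivAt_compInvDeriv₂ hV hw hη (hβV x hx) (hne x hx)⟩

lemma eventually_iteratedDeriv_comp_eq_compInvDeriv {δ₀ : ℝ} (hδ₀ : 0 < δ₀)
    (hw : ContDiffOn ℝ 3 w (Ioo (-δ₀) δ₀)) (hη : ContDiffOn ℝ 3 η (Ioo (-δ₀) δ₀))
    (hP : (fun t => iteratedDeriv 1 η t - 3 * t ^ 2) =O[𝓝[>] 0] (fun t => t ^ 3))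
    (hinv : ∀ x ∈ Ioo 0 δ₀, η (β x) = x) (hβ : Tendsto β (𝓝[>] 0) (𝓝[>] 0)) :
    ∀ᶠ x in 𝓝[>] 0, iteratedDeriv 2 (fun y => w (β y)) x = compInvDeriv₂ w η (β x) ∧
      iteratedDeriv 3 (fun y => w (β y)) x = compInvDeriv₃ w η (β x) := by
  have hpos : ∀ᶠ t in 𝓝[>] 0, 0 < iteratedDeriv 1 η t := by
    filter_upwards [eventually_half_mul_pow_le_of_sub_isBigO (by norm_num) hP,
      self_mem_nhdsWithin] with t ht (ht0 : 0 < t)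
    exact lt_of_lt_of_le (by positivity) ht
  obtain ⟨r, hr, hsub⟩ := mem_nhdsGT_iff_exists_Ioo_subset.mp (hpos.and (Ioo_mem_nhdsGT hδ₀))
  have hr2 : r / 2 ∈ Ioo 0 r := ⟨half_pos hr, half_lt_self hr⟩
  have habV : Icc 0 (r / 2) ⊆ Ioo (-δ₀) δ₀ := fun t ht =>
    ⟨by linarith [ht.1], ht.2.trans_lt (hsub hr2).2.2⟩
  obtain ⟨δ₁, hδ₁, hU⟩ := mem_nhdsGT_iff_exists_Ioo_subset.mp
    ((hβ.eventually (Ioo_mem_nhdsGT hr2.1)).and (Ioo_mem_nhdsGT hδ₀))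
  obtain ⟨h2, h3⟩ := iteratedDeriv_comp_eqOn_compInvDeriv isOpen_Ioo hw hη habV
    (fun t ht => (hsub ⟨ht.1, ht.2.trans hr2.2⟩).1) isOpen_Ioo (fun x hx => hinv x (hU hx).2)
    (fun x hx => (hU hx).1)
  filter_upwards [Ioo_mem_nhdsGT hδ₁] with x hx using ⟨h2 hx, h3 hx⟩

end InverseFunction

section Quotients

variable {w η : ℝ → ℝ}

lemma isBigO_compInvDeriv₂_sub
    (hP : (fun t => iteratedDeriv 1 η t - 3 * t ^ 2) =O[𝓝[>] 0] (fun t => t ^ 3))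
    (hQ : (fun t => iteratedDeriv 2 η t - 6 * t) =O[𝓝[>] 0] (fun t => t ^ 2))
    (hA : (fun t => iteratedDeriv 1 w t + 1) =O[𝓝[>] 0] (fun t => t))
    (hB : iteratedDeriv 2 w =O[𝓝[>] 0] (fun _ => (1 : ℝ))) :
    (fun t => compInvDeriv₂ w η t - 2 / 9 * t ^ (-5 : ℤ)) =O[𝓝[>] 0] (· ^ (-4 : ℤ)) := by
  have hP2 := (isBigO_pow_of_sub_isBigO hP).zpow_natCast
  have hP3inv : (fun t => (iteratedDeriv 1 η t ^ 3)⁻¹) =O[𝓝[>] 0] (· ^ (-6 : ℤ)) :=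
    isBigO_inv_pow_of_sub_isBigO (by norm_num) hP 3
  have hQ1 : iteratedDeriv 2 η =O[𝓝[>] 0] (· ^ (1 : ℤ)) :=
    (isBigO_pow_of_sub_isBigO (n := 1) (by simpa using hQ)).zpow_natCast
  have hA1 : (fun t => iteratedDeriv 1 w t + 1) =O[𝓝[>] 0] (· ^ (1 : ℤ)) :=
    hA.congr_right fun t => by simp
  have ht2 : (fun t : ℝ => 3 * t ^ 2) =O[𝓝[>] 0] (· ^ (2 : ℤ)) :=
    ((isBigO_refl (fun t : ℝ => t ^ 2) _).const_mul_left 3).zpow_natCast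
  -- `(3t²)³ - η'³ = (3t² - η') (9t⁴ + 3t²η' + η'²)`
  have hcube : (fun t => (3 * t ^ 2) ^ 3 - iteratedDeriv 1 η t ^ 3)
      =O[𝓝[>] 0] (· ^ (7 : ℤ)) := by
    have hsum : (fun t => (3 * t ^ 2) ^ 2 + 3 * t ^ 2 * iteratedDeriv 1 η t
        + iteratedDeriv 1 η t ^ 2) =O[𝓝[>] 0] (· ^ (4 : ℤ)) :=
      (((ht2.mul_zpow ht2 le_rfl).congr_left fun t => by ring).add
        (ht2.mul_zpow hP2 le_rfl)).add ((hP2.mul_zpow hP2 le_rfl).congr_left fun t => by ring)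
    exact ((hP.zpow_natCast.neg_left.mul_zpow hsum le_rfl).congr_left fun t => by ring)
  have hcube_inv : (fun t : ℝ => ((3 * t ^ 2) ^ 3)⁻¹) =O[𝓝[>] 0] (· ^ (-6 : ℤ)) :=
    isBigO_inv_of_eventually_le (c := 27) (n := 6) (by norm_num)
      (Eventually.of_forall fun t => by ring_nf; rfl)
  have ht1 : (fun t : ℝ => 6 * t) =O[𝓝[>] 0] (· ^ (1 : ℤ)) :=
    ((isBigO_refl (fun t : ℝ => t) _).const_mul_left 6).congr_right fun t => by simp
  -- `η'` is replaced by `3t²` in the leading term `6t / η'³`, which is where `2/9` comes from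
  have hsplit : (fun t => iteratedDeriv 2 w t * iteratedDeriv 1 η t * (iteratedDeriv 1 η t ^ 3)⁻¹
      - (iteratedDeriv 1 w t + 1) * iteratedDeriv 2 η t * (iteratedDeriv 1 η t ^ 3)⁻¹
      + (iteratedDeriv 2 η t - 6 * t) * (iteratedDeriv 1 η t ^ 3)⁻¹
      + 6 * t * ((3 * t ^ 2) ^ 3 - iteratedDeriv 1 η t ^ 3) * (iteratedDeriv 1 η t ^ 3)⁻¹
        * ((3 * t ^ 2) ^ 3)⁻¹)
      =ᶠ[𝓝[>] 0] (fun t => compInvDeriv₂ w η t - 2 / 9 * t ^ (-5 : ℤ)) := by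
    filter_upwards [self_mem_nhdsWithin,
      eventually_half_mul_pow_le_of_sub_isBigO (by norm_num) hP] with t (ht : 0 < t) hPt
    have hP0 : iteratedDeriv 1 η t ≠ 0 := (lt_of_lt_of_le (by positivity) hPt).ne'
    rw [compInvDeriv₂, zpow_neg, zpow_ofNat]
    field_simp
    ring
  refine IsBigO.congr' ?_ hsplit EventuallyEq.rfl
  exact ((((hB.zpow_zero.mul_zpow hP2 le_rfl).mul_zpow hP3inv (by norm_num)).sub
    ((hA1.mul_zpow hQ1 le_rfl).mul_zpow hP3inv (by norm_num))).add
    (hQ.zpow_natCast.mul_zpow hP3inv (by norm_num))).add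
    (((ht1.mul_zpow hcube le_rfl).mul_zpow hP3inv le_rfl).mul_zpow hcube_inv (by norm_num))

lemma isBigO_compInvDeriv₃
    (hP : (fun t => iteratedDeriv 1 η t - 3 * t ^ 2) =O[𝓝[>] 0] (fun t => t ^ 3))
    (hQ : (fun t => iteratedDeriv 2 η t - 6 * t) =O[𝓝[>] 0] (fun t => t ^ 2))
    (hR : iteratedDeriv 3 η =O[𝓝[>] 0] (fun _ => (1 : ℝ)))
    (hA : iteratedDeriv 1 w =O[𝓝[>] 0] (fun _ => (1 : ℝ)))
    (hB : iteratedDeriv 2 w =O[𝓝[>] 0] (fun _ => (1 : ℝ)))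
    (hT : iteratedDeriv 3 w =O[𝓝[>] 0] (fun _ => (1 : ℝ))) :
    compInvDeriv₃ w η =O[𝓝[>] 0] (· ^ (-8 : ℤ)) := by
  have hP2 := (isBigO_pow_of_sub_isBigO hP).zpow_natCast
  have hP5inv : (fun t => (iteratedDeriv 1 η t ^ 5)⁻¹) =O[𝓝[>] 0] (· ^ (-10 : ℤ)) :=
    isBigO_inv_pow_of_sub_isBigO (by norm_num) hP 5
  have hQ1 : iteratedDeriv 2 η =O[𝓝[>] 0] (· ^ (1 : ℤ)) :=
    (isBigO_pow_of_sub_isBigO (n := 1) (by simpa using hQ)).zpow_natCast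
  have hnum : (fun t => iteratedDeriv 3 w t * iteratedDeriv 1 η t * iteratedDeriv 1 η t
      - iteratedDeriv 1 w t * iteratedDeriv 3 η t * iteratedDeriv 1 η t
      - 3 * (iteratedDeriv 2 w t * iteratedDeriv 1 η t * iteratedDeriv 2 η t)
      + 3 * (iteratedDeriv 1 w t * iteratedDeriv 2 η t * iteratedDeriv 2 η t))
      =O[𝓝[>] 0] (· ^ (2 : ℤ)) :=
    ((((hT.zpow_zero.mul_zpow hP2 le_rfl).mul_zpow hP2 (by norm_num)).sub
      ((hA.zpow_zero.mul_zpow hR.zpow_zero le_rfl).mul_zpow hP2 (by norm_num))).sub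
      (((hB.zpow_zero.mul_zpow hP2 le_rfl).mul_zpow hQ1 (by norm_num)).const_mul_left 3)).add
      (((hA.zpow_zero.mul_zpow hQ1 le_rfl).mul_zpow hQ1 (by norm_num)).const_mul_left 3)
  exact (hnum.mul_zpow hP5inv (by norm_num)).congr_left fun t => by
    rw [compInvDeriv₃]
    ring

end Quotients

section NearIdentity

variable {b : ℝ → ℝ}

lemma isBigO_zpow_sub_zpow_of_sub_isBigO
    (hb : (fun s => b s - s) =O[𝓝[>] 0] (fun s => s ^ 2)) (k : ℤ) :
    (fun s => b s ^ k - s ^ k) =O[𝓝[>] 0] (· ^ (k + 1)) := by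
  have hinv : (fun s : ℝ => s⁻¹) =O[𝓝[>] 0] (· ^ (-1 : ℤ)) :=
    (isBigO_refl _ _).congr_right fun s => (zpow_neg_one s).symm
  have hratio : (fun s => b s / s - 1) =O[𝓝[>] 0] (· ^ (1 : ℤ)) := by
    refine (hb.zpow_natCast.mul_zpow hinv (by norm_num)).congr' ?_ EventuallyEq.rfl
    filter_upwards [self_mem_nhdsWithin] with s (hs : 0 < s)
    field_simp
  have hlim : Tendsto (fun s => b s / s) (𝓝[>] 0) (𝓝 1) := by
    have h0 : Tendsto (fun s : ℝ => s ^ (1 : ℤ)) (𝓝[>] 0) (𝓝 0) := by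
      simpa using tendsto_nhdsWithin_of_tendsto_nhds (continuous_id'.tendsto (0 : ℝ))
    simpa using (hratio.trans_tendsto h0).add_const 1
  have hlip : (fun u : ℝ => u ^ k - 1) =O[𝓝 1] (fun u => u - 1) := by
    simpa using ((differentiableAt_zpow (𝕜 := ℝ) (m := k) (x := 1)).mpr
      (Or.inl one_ne_zero)).isBigO_sub
  refine (((hlip.comp_tendsto hlim).trans hratio).mul_zpow (isBigO_refl (· ^ k) _)
    (by rw [add_comm])).congr' ?_ EventuallyEq.rfl
  filter_upwards [self_mem_nhdsWithin] with s (hs : 0 < s)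
  simp only [Function.comp, div_zpow, sub_mul, one_mul]
  rw [div_mul_cancel₀ _ (zpow_ne_zero k hs.ne')]

lemma isBigO_zpow_of_sub_isBigO (hb : (fun s => b s - s) =O[𝓝[>] 0] (fun s => s ^ 2))
    (k : ℤ) : (fun s => b s ^ k) =O[𝓝[>] 0] (· ^ k) :=
  (((isBigO_zpow_sub_zpow_of_sub_isBigO hb k).zpow_of_le (Int.le_add_one le_rfl)).add
    (isBigO_refl _ _)).congr_left fun _ => sub_add_cancel _ _

lemma tendsto_nhdsGT_of_sub_isBigO (hb : (fun s => b s - s) =O[𝓝[>] 0] (fun s => s ^ 2)) :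
    Tendsto b (𝓝[>] 0) (𝓝[>] 0) := by
  have hb' : (fun s => b s - 1 * s ^ 1) =O[𝓝[>] 0] (fun s => s ^ (1 + 1)) := by simpa using hb
  refine tendsto_nhdsWithin_iff.mpr ⟨(isBigO_pow_of_sub_isBigO hb').trans_tendsto ?_, ?_⟩
  · simpa using tendsto_nhdsWithin_of_tendsto_nhds (continuous_id'.tendsto (0 : ℝ))
  · filter_upwards [eventually_half_mul_pow_le_of_sub_isBigO one_pos hb', self_mem_nhdsWithin]
      with s hs (hs0 : 0 < s)
    exact lt_of_lt_of_le (by positivity) hs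

lemma Asymptotics.IsBigO.comp_of_sub_isBigO {G : ℝ → ℝ} {k : ℤ} (hG : G =O[𝓝[>] 0] (· ^ k))
    (hb : (fun s => b s - s) =O[𝓝[>] 0] (fun s => s ^ 2)) :
    (fun s => G (b s)) =O[𝓝[>] 0] (· ^ k) :=
  (hG.comp_tendsto (tendsto_nhdsGT_of_sub_isBigO hb)).trans (isBigO_zpow_of_sub_isBigO hb k)

end NearIdentity

section CubeRoot

lemma rpow_one_third_zpow {x : ℝ} (hx : 0 ≤ x) (k : ℤ) :
    (x ^ ((1 : ℝ) / 3)) ^ k = x ^ ((k : ℝ) / 3) := by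
  rw [← Real.rpow_intCast, ← Real.rpow_mul hx]
  ring_nf

lemma cube_rpow_div_three {s : ℝ} (hs : 0 ≤ s) (p : ℝ) : (s ^ 3) ^ (p / 3) = s ^ p := by
  rw [← Real.rpow_natCast s 3, ← Real.rpow_mul hs]
  ring_nf

lemma tendsto_rpow_one_third : Tendsto (fun x : ℝ => x ^ ((1 : ℝ) / 3)) (𝓝[>] 0) (𝓝[>] 0) := by
  refine tendsto_nhdsWithin_iff.mpr ⟨?_, ?_⟩
  · have := (Real.continuousAt_rpow_const 0 ((1 : ℝ) / 3) (Or.inr (by norm_num))).tendsto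
    rw [Real.zero_rpow (by norm_num)] at this
    exact tendsto_nhdsWithin_of_tendsto_nhds this
  · filter_upwards [self_mem_nhdsWithin] with x (hx : 0 < x) using Real.rpow_pos_of_pos hx _

lemma eventually_comp_cube_rpow_one_third (F : ℝ → ℝ) :
    ∀ᶠ x in 𝓝[>] (0 : ℝ), F ((x ^ ((1 : ℝ) / 3)) ^ 3) = F x := by
  filter_upwards [self_mem_nhdsWithin] with x (hx : 0 < x)
  rw [← zpow_natCast, rpow_one_third_zpow hx.le]
  norm_num

lemma Asymptotics.IsBigO.comp_rpow_one_third {G : ℝ → ℝ} {k : ℤ} (h : G =O[𝓝[>] 0] (· ^ k)) :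
    (fun x => G (x ^ ((1 : ℝ) / 3))) =O[𝓝[>] 0] (fun x => x ^ ((k : ℝ) / 3)) := by
  refine (h.comp_tendsto tendsto_rpow_one_third).congr' EventuallyEq.rfl ?_
  filter_upwards [self_mem_nhdsWithin] with x (hx : 0 < x) using rpow_one_third_zpow hx.le k

variable {β : ℝ → ℝ}

lemma isBigO_comp_cube_sub_of_expansion {δ₀ α₂ α₃ C₀ : ℝ} (hδ₀ : 0 < δ₀)
    (h : ∀ x ∈ Ioo 0 δ₀, |β x - (x ^ ((1 : ℝ) / 3) + α₂ * x ^ ((2 : ℝ) / 3) + α₃ * x)|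
      ≤ C₀ * x ^ ((4 : ℝ) / 3)) :
    (fun s => β (s ^ 3) - s) =O[𝓝[>] 0] (fun s => s ^ 2) := by
  have hcube : ∀ᶠ s in 𝓝[>] (0 : ℝ), s ^ 3 ∈ Ioo 0 δ₀ := by
    have : Tendsto (fun s : ℝ => s ^ 3) (𝓝[>] 0) (𝓝 0) :=
      tendsto_nhdsWithin_of_tendsto_nhds (by simpa using (continuous_pow 3).tendsto (0 : ℝ))
    filter_upwards [this.eventually (gt_mem_nhds hδ₀), self_mem_nhdsWithin]
      with s hs (hs0 : 0 < s)
    exact ⟨by positivity, hs⟩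
  have hrem : (fun s => β (s ^ 3) - (s + α₂ * s ^ 2 + α₃ * s ^ 3))
      =O[𝓝[>] 0] (fun s => s ^ 4) := by
    refine IsBigO.of_bound C₀ ?_
    filter_upwards [hcube, self_mem_nhdsWithin] with s hs (hs0 : 0 < s)
    have hs' := h _ hs
    rw [cube_rpow_div_three hs0.le, cube_rpow_div_three hs0.le, cube_rpow_div_three hs0.le] at hs'
    simpa [Real.norm_eq_abs, abs_of_pos hs0] using hs'
  have hpow : ∀ n : ℕ, 2 < n → (fun s : ℝ => s ^ n) =O[𝓝[>] 0] (fun s => s ^ 2) := fun n hn =>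
    (isLittleO_pow_pow hn).isBigO.mono nhdsWithin_le_nhds
  exact ((hrem.trans (hpow 4 (by norm_num))).add (((isBigO_refl _ _).const_mul_left α₂).add
    ((hpow 3 (by norm_num)).const_mul_left α₃))).congr_left fun s => by ring

lemma tendsto_nhdsGT_of_comp_cube_sub_isBigO
    (hb : (fun s => β (s ^ 3) - s) =O[𝓝[>] 0] (fun s => s ^ 2)) : Tendsto β (𝓝[>] 0) (𝓝[>] 0) :=
  ((tendsto_nhdsGT_of_sub_isBigO hb).comp tendsto_rpow_one_third).congr'
    (eventually_comp_cube_rpow_one_third β)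

lemma Asymptotics.IsBigO.comp_of_comp_cube_sub_isBigO {G : ℝ → ℝ} {k : ℤ}
    (hG : G =O[𝓝[>] 0] (· ^ k)) (hb : (fun s => β (s ^ 3) - s) =O[𝓝[>] 0] (fun s => s ^ 2)) :
    (fun x => G (β x)) =O[𝓝[>] 0] (fun x => x ^ ((k : ℝ) / 3)) :=
  ((hG.comp_of_sub_isBigO hb).comp_rpow_one_third).congr'
    (eventually_comp_cube_rpow_one_third (fun x => G (β x))) EventuallyEq.rfl

lemma isBigO_zpow_sub_rpow_of_comp_cube_sub_isBigO
    (hb : (fun s => β (s ^ 3) - s) =O[𝓝[>] 0] (fun s => s ^ 2)) (k : ℤ) :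
    (fun x => β x ^ k - x ^ ((k : ℝ) / 3))
      =O[𝓝[>] 0] (fun x => x ^ (((k + 1 : ℤ) : ℝ) / 3)) := by
  refine ((isBigO_zpow_sub_zpow_of_sub_isBigO hb k).comp_rpow_one_third).congr' ?_
    EventuallyEq.rfl
  filter_upwards [eventually_comp_cube_rpow_one_third β, self_mem_nhdsWithin]
    with x hx (hx0 : 0 < x)
  simp only [hx, rpow_one_third_zpow hx0.le]

end CubeRoot

lemma exists_forall_Ioo_abs_le_of_isBigO {f₁ f₂ : ℝ → ℝ} {p₁ p₂ : ℝ}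
    (h₁ : f₁ =O[𝓝[>] 0] (· ^ p₁)) (h₂ : f₂ =O[𝓝[>] 0] (· ^ p₂)) :
    ∃ δ > 0, ∃ C > 0, ∀ x ∈ Ioo 0 δ, |f₁ x| ≤ C * x ^ p₁ ∧ |f₂ x| ≤ C * x ^ p₂ := by
  obtain ⟨c₁, hc₁, h₁⟩ := h₁.exists_pos
  obtain ⟨c₂, -, h₂⟩ := h₂.exists_pos
  obtain ⟨δ, hδ, hsub⟩ := mem_nhdsGT_iff_exists_Ioo_subset.mp (h₁.bound.and h₂.bound)
  refine ⟨δ, hδ, max c₁ c₂, lt_max_of_lt_left hc₁, fun x hx => ?_⟩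
  obtain ⟨hx₁, hx₂⟩ := hsub hx
  simp only [Real.norm_eq_abs, abs_of_nonneg (Real.rpow_nonneg hx.1.le _)] at hx₁ hx₂
  exact ⟨hx₁.trans (by gcongr; exacts [Real.rpow_nonneg hx.1.le _, le_max_left _ _]),
    hx₂.trans (by gcongr; exacts [Real.rpow_nonneg hx.1.le _, le_max_right _ _])⟩

theorem stmt5_general (w0 η β : ℝ → ℝ) (δ₀ α₂ α₃ C₀ : ℝ) (hδ₀ : 0 < δ₀)
    (hw0 : ContDiffOn ℝ 4 w0 (Set.Ioo (-δ₀) δ₀)) (hw01 : deriv w0 0 = -1)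
    (hη : ContDiffOn ℝ 4 η (Set.Ioo (-δ₀) δ₀)) (hη1 : deriv η 0 = 0)
    (hη2 : iteratedDeriv 2 η 0 = 0) (hη3 : iteratedDeriv 3 η 0 = 6)
    (hβ : ∀ x ∈ Set.Ioo (0 : ℝ) δ₀, η (β x) = x ∧
      |β x - (x ^ ((1:ℝ)/3) + α₂ * x ^ ((2:ℝ)/3) + α₃ * x)| ≤ C₀ * x ^ ((4:ℝ)/3)) :
    ∃ δ > 0, ∃ C > 0, ∀ x ∈ Set.Ioo (0 : ℝ) δ,
      |iteratedDeriv 2 (fun y => w0 (β y)) x - (2/9) * x ^ (-(5:ℝ)/3)|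
        ≤ C * x ^ (-(4:ℝ)/3) ∧
      |iteratedDeriv 3 (fun y => w0 (β y)) x| ≤ C * x ^ (-(8:ℝ)/3) := by
  have hU : IsOpen (Ioo (-δ₀) δ₀) := isOpen_Ioo
  have h0 : (0 : ℝ) ∈ Ioo (-δ₀) δ₀ := ⟨neg_lt_zero.mpr hδ₀, hδ₀⟩
  obtain ⟨hP, hQ⟩ := isBigO_iteratedDeriv_sub_of_cubic hη hU h0 (by rwa [iteratedDeriv_one]) hη2 hη3
  have hA : (fun t => iteratedDeriv 1 w0 t + 1) =O[𝓝[>] 0] (fun t => t) := by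
    simpa [hw01] using hw0.isBigO_iteratedDeriv_sub hU h0 (k := 1) (by norm_num)
  have hw : ∀ k ≤ 4, iteratedDeriv k w0 =O[𝓝[>] 0] (fun _ => (1 : ℝ)) := fun k hk =>
    hw0.isBigO_one_iteratedDeriv hU h0 hk
  have hb := isBigO_comp_cube_sub_of_expansion hδ₀ fun x hx => (hβ x hx).2
  have hderiv := eventually_iteratedDeriv_comp_eq_compInvDeriv hδ₀ (hw0.of_le (by norm_num))
    (hη.of_le (by norm_num)) hP (fun x hx => (hβ x hx).1)
    (tendsto_nhdsGT_of_comp_cube_sub_isBigO hb)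
  have h2 := ((isBigO_compInvDeriv₂_sub hP hQ hA (hw 2 (by norm_num))).comp_of_comp_cube_sub_isBigO
    hb).add ((isBigO_zpow_sub_rpow_of_comp_cube_sub_isBigO hb (-5)).const_mul_left (2 / 9))
  have h3 := (isBigO_compInvDeriv₃ hP hQ (hη.isBigO_one_iteratedDeriv hU h0 (k := 3) (by norm_num))
    (hw 1 (by norm_num)) (hw 2 (by norm_num)) (hw 3 (by norm_num))).comp_of_comp_cube_sub_isBigO hb
  refine exists_forall_Ioo_abs_le_of_isBigO (h2.congr' ?_ ?_) (h3.congr' ?_ ?_)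
  · filter_upwards [hderiv] with x hx
    rw [hx.1]
    push_cast
    ring
  · exact Eventually.of_forall fun x => by norm_num
  · filter_upwards [hderiv] with x hx using hx.2.symm
  · exact Eventually.of_forall fun x => by norm_num

/-- Higher derivatives of the pre-shock profile `w(x) = w₀(β(x))`:
`w''(x) = (2/9) x^{-5/3} + O(x^{-4/3})` and `w'''(x) = O(x^{-8/3})` as `x → 0⁺`. -/
theorem stmt5 (w0 η β : ℝ → ℝ) (δ₀ α₂ α₃ C₀ : ℝ) (hδ₀ : 0 < δ₀) (hC₀ : 0 < C₀)
    (hw0 : ContDiffOn ℝ 4 w0 (Set.Ioo (-δ₀) δ₀)) (hw00 : w0 0 = 0) (hw01 : deriv w0 0 = -1)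
    (hη : ContDiffOn ℝ 4 η (Set.Ioo (-δ₀) δ₀)) (hη0 : η 0 = 0) (hη1 : deriv η 0 = 0)
    (hη2 : iteratedDeriv 2 η 0 = 0) (hη3 : iteratedDeriv 3 η 0 = 6)
    (hβ : ∀ x ∈ Set.Ioo (0 : ℝ) δ₀, η (β x) = x ∧
      |β x - (x ^ ((1:ℝ)/3) + α₂ * x ^ ((2:ℝ)/3) + α₃ * x)| ≤ C₀ * x ^ ((4:ℝ)/3)) :
    ∃ δ > 0, ∃ C > 0, ∀ x ∈ Set.Ioo (0 : ℝ) δ,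
      |iteratedDeriv 2 (fun y => w0 (β y)) x - (2/9) * x ^ (-(5:ℝ)/3)|
        ≤ C * x ^ (-(4:ℝ)/3) ∧
      |iteratedDeriv 3 (fun y => w0 (β y)) x| ≤ C * x ^ (-(8:ℝ)/3) :=
  stmt5_general w0 η β δ₀ α₂ α₃ C₀ hδ₀ hw0 hw01 hη hη1 hη2 hη3 hβ
end

section
/- Fix constants M > 1 large and ε > 0 small with M⁴ε ≪ 1. Let ζ ∈ ℝ with |ζ| ≤ M⁴τ for small τ ≥ 0, and consider the equation ζ = y³ - y + 𝓛(y,τ) where 𝓛 is C¹ in (y,τ) on |y| ≤ 10, 0 ≤ τ ≤ ε, satisfying |𝓛(y,τ) - c y²τ| ≤ 2M³τ², |∂_y 𝓛(y,τ) - 2cyτ| ≤ 6M³τ², |∂_τ 𝓛(y,τ) - cy²| ≤ 8M³τ for a constant c. Then for each small ζ and τ there exist exactly one solution y₊(ζ,τ) near +1 and one solution y₋(ζ,τ) near -1, and y₊(ζ,τ) = ±1 + ζ/2 - (c/2)τ + O(τ²). -/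
/-!
Fix τ and a sign s = ±1 and put F y = y³ - y + L y τ. The unperturbed cubic has slope 2 at s, and
the hypotheses on ∂_y L move it by O(τ), so F' ≥ 1 on |y - s| ≤ 1/10; hence F is injective there.
With δ = ζ/2 - cτ/2, the solution of the linearised equation 2δ + cτ = ζ, the first-order terms
cancel and F (s + δ) - ζ = O(τ²). Since F' ≥ 1, the intermediate value theorem then yields a root
within O(τ²) of s + δ. At τ = 0 the bound on L forces L · 0 = 0 near s, which replaces the
differentiability that the C¹ hypothesis only provides in the interior.
-/

open Set Filter Topology

theorem exists_unique_root_of_le_deriv {F : ℝ → ℝ} {p q a η m ζ : ℝ} (hm : 0 < m)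
    (hF : ∀ x ∈ Icc p q, DifferentiableAt ℝ F x) (hF' : ∀ x ∈ Icc p q, m ≤ deriv F x)
    (hsub : Icc (a - η) (a + η) ⊆ Icc p q) (hζ : |F a - ζ| ≤ m * η) :
    ∃ x ∈ Icc (a - η) (a + η), F x = ζ ∧ ∀ y ∈ Icc p q, F y = ζ → y = x := by
  have hcont : ContinuousOn F (Icc p q) := fun x hx =>
    (hF x hx).continuousAt.continuousWithinAt
  have hF'int : ∀ x ∈ interior (Icc p q), m ≤ deriv F x := fun x hx =>
    hF' x (interior_subset hx)
  have hgrowth := (convex_Icc p q).mul_sub_le_image_sub_of_le_deriv hcont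
    (fun x hx => (hF x (interior_subset hx)).differentiableWithinAt) hF'int
  have hmono : StrictMonoOn F (Icc p q) :=
    strictMonoOn_of_deriv_pos (convex_Icc p q) hcont fun x hx => hm.trans_le (hF'int x hx)
  have hη : 0 ≤ η := (mul_nonneg_iff_of_pos_left hm).1 ((abs_nonneg _).trans hζ)
  have ha : a ∈ Icc (a - η) (a + η) := ⟨by linarith, by linarith⟩
  have hleft := hgrowth (a - η) (hsub ⟨le_rfl, by linarith⟩) a (hsub ha) (by linarith)
  have hright := hgrowth a (hsub ha) (a + η) (hsub ⟨by linarith, le_rfl⟩) (by linarith)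
  obtain ⟨hζl, hζr⟩ := abs_le.1 hζ
  obtain ⟨x, hx, hFx⟩ := intermediate_value_Icc (by linarith) (hcont.mono hsub)
    (⟨by linarith, by linarith⟩ : ζ ∈ Icc (F (a - η)) (F (a + η)))
  exact ⟨x, hx, hFx, fun y hy hFy => hmono.injOn hy (hsub hx) (hFy.trans hFx.symm)⟩

theorem differentiableAt_left_of_contDiffOn_prod {𝕜 E F G : Type*} [NontriviallyNormedField 𝕜]
    [NormedAddCommGroup E] [NormedSpace 𝕜 E] [NormedAddCommGroup F] [NormedSpace 𝕜 F]
    [NormedAddCommGroup G] [NormedSpace 𝕜 G] {n : WithTop ℕ∞} {f : E → F → G}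
    {s : Set E} {t : Set F} {x : E} {y : F}
    (hf : ContDiffOn 𝕜 n (fun p : E × F => f p.1 p.2) (s ×ˢ t)) (hn : n ≠ 0)
    (hs : s ∈ 𝓝 x) (ht : t ∈ 𝓝 y) : DifferentiableAt 𝕜 (fun x' => f x' y) x :=
  ((hf.contDiffAt (prod_mem_nhds hs ht)).differentiableAt hn).comp (f := fun x' => (x', y)) x
    (differentiableAt_id.prodMk (differentiableAt_const y))

theorem one_le_cubic_deriv {s c B τ y d : ℝ} (hs : |s| = 1) (hy : |y - s| ≤ 1 / 10)
    (hc : |c| ≤ B) (hB : 1 ≤ B) (hτ : 0 ≤ τ) (hBτ : B * τ ≤ 1 / 1000)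
    (hd : |d - 2 * c * y * τ| ≤ 6 * B * τ ^ 2) : 1 ≤ 3 * y ^ 2 - 1 + d := by
  have hy' : 9 / 10 ≤ |y| ∧ |y| ≤ 2 := by
    obtain ⟨hy₁, hy₂⟩ := abs_le.1 hy
    rcases (abs_eq zero_le_one).1 hs with rfl | rfl
    · rw [abs_of_pos (by linarith)]; constructor <;> linarith
    · rw [abs_of_neg (by linarith)]; constructor <;> linarith
  have hy2 : 81 / 100 ≤ y ^ 2 := by
    rw [← sq_abs]; nlinarith
  have hcτ : |c * τ| ≤ 1 / 1000 := by
    rw [abs_mul, abs_of_nonneg hτ]; nlinarith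
  have hcyτ : |2 * c * y * τ| ≤ 4 / 1000 :=
    calc |2 * c * y * τ| = 2 * |c * τ| * |y| := by
          rw [show 2 * c * y * τ = 2 * (c * τ) * y by ring, abs_mul, abs_mul, abs_two]
      _ ≤ 2 * (1 / 1000) * 2 := by gcongr; exact hy'.2
      _ = 4 / 1000 := by norm_num
  have hτ2 : B * τ ^ 2 ≤ 1 / 1000000 := by nlinarith
  linarith [abs_le.1 hd, abs_le.1 hcyτ]

theorem abs_cubic_residual_le {s c B τ ζ δ ℓ : ℝ} (hs : |s| = 1) (hc : |c| ≤ B)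
    (hB : 1 ≤ B) (hτ : 0 ≤ τ) (hBτ : B * τ ≤ 1 / 1000) (hζ : ζ = 2 * δ + c * τ)
    (hδ : |δ| ≤ B * τ) (hℓ : |ℓ - c * (s + δ) ^ 2 * τ| ≤ 2 * B * τ ^ 2) :
    |(s + δ) ^ 3 - (s + δ) + ℓ - ζ| ≤ 8 * B ^ 2 * τ ^ 2 := by
  have hsplit : (s + δ) ^ 3 - (s + δ) + ℓ - ζ
      = δ ^ 2 * (3 * s + δ + c * τ) + 2 * (c * s * δ * τ) + (ℓ - c * (s + δ) ^ 2 * τ) := by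
    have hs₂ : s ^ 2 = 1 := by rw [← sq_abs, hs, one_pow]
    rw [hζ]; linear_combination (s + 3 * δ + c * τ) * hs₂
  have hcτ : |c * τ| ≤ 1 / 1000 := by
    rw [abs_mul, abs_of_nonneg hτ]; nlinarith
  have hfactor : |3 * s + δ + c * τ| ≤ 4 :=
    calc |3 * s + δ + c * τ| ≤ |3 * s| + |δ| + |c * τ| := abs_add_three _ _ _
      _ ≤ 3 + 1 / 1000 + 1 / 1000 := by
          rw [abs_mul, hs]; gcongr <;> norm_num; linarith
      _ ≤ 4 := by norm_num
  rw [hsplit]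
  calc _ ≤ |δ ^ 2 * (3 * s + δ + c * τ)| + |2 * (c * s * δ * τ)| + |ℓ - c * (s + δ) ^ 2 * τ| :=
        abs_add_three _ _ _
    _ = |δ| ^ 2 * |3 * s + δ + c * τ| + 2 * (|c| * |δ| * τ) + |ℓ - c * (s + δ) ^ 2 * τ| := by
        simp only [abs_mul, abs_pow, abs_two, hs, abs_of_nonneg hτ, mul_one]
    _ ≤ (B * τ) ^ 2 * 4 + 2 * (B * (B * τ) * τ) + 2 * B * τ ^ 2 := by gcongr
    _ ≤ 8 * B ^ 2 * τ ^ 2 := by nlinarith [sq_nonneg τ]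

theorem exists_unique_root_cubic_add {g : ℝ → ℝ} {s c B τ ζ : ℝ} (hs : |s| = 1)
    (hc : |c| ≤ B) (hB : 1 ≤ B) (hτ : 0 ≤ τ) (hBτ : B * τ ≤ 1 / 1000) (hζ : |ζ| ≤ B * τ)
    (hg : ∀ y, |y - s| ≤ 1 / 10 → DifferentiableAt ℝ g y)
    (hg₁ : ∀ y, |y - s| ≤ 1 / 10 → |g y - c * y ^ 2 * τ| ≤ 2 * B * τ ^ 2)
    (hg₂ : ∀ y, |y - s| ≤ 1 / 10 → |deriv g y - 2 * c * y * τ| ≤ 6 * B * τ ^ 2) :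
    ∃ x, x ^ 3 - x + g x = ζ ∧ |x - (s + ζ / 2 - c / 2 * τ)| ≤ 8 * B ^ 2 * τ ^ 2 ∧
      ∀ y, |y - s| ≤ 1 / 10 → y ^ 3 - y + g y = ζ → y = x := by
  have hI : ∀ {y r : ℝ}, y ∈ Icc (s - r) (s + r) ↔ |y - s| ≤ r := by
    intro y r; rw [abs_sub_comm, mem_Icc_iff_abs_le]
  have hF : ∀ y, |y - s| ≤ 1 / 10 →
      HasDerivAt (fun y => y ^ 3 - y + g y) (3 * y ^ 2 - 1 + deriv g y) y := fun y hy =>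
    (((hasDerivAt_pow 3 y).sub (hasDerivAt_id' y)).add (hg y hy).hasDerivAt).congr_deriv
      (by norm_num)
  set δ := ζ / 2 - c / 2 * τ with hδ_def
  have hδ : |δ| ≤ B * τ :=
    calc |δ| ≤ |ζ| / 2 + |c| * τ / 2 := by
          refine (abs_sub _ _).trans_eq ?_
          rw [abs_div, abs_mul, abs_div, abs_two, abs_of_nonneg hτ]; ring
      _ ≤ B * τ := by nlinarith
  have hη : 8 * B ^ 2 * τ ^ 2 ≤ 8 / 1000000 := by
    nlinarith [mul_self_le_mul_self (by positivity : 0 ≤ B * τ) hBτ]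
  obtain ⟨x, hx, hFx, huniq⟩ := exists_unique_root_of_le_deriv (F := fun y => y ^ 3 - y + g y)
    (p := s - 1 / 10) (q := s + 1 / 10) (a := s + δ) (η := 8 * B ^ 2 * τ ^ 2) one_pos
    (fun y hy => (hF y (hI.1 hy)).differentiableAt)
    (fun y hy => by
      rw [(hF y (hI.1 hy)).deriv]
      exact one_le_cubic_deriv hs (hI.1 hy) hc hB hτ hBτ (hg₂ y (hI.1 hy)))
    (Icc_subset_Icc (by linarith [abs_le.1 hδ]) (by linarith [abs_le.1 hδ]))
    (by
      rw [one_mul]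
      refine abs_cubic_residual_le hs hc hB hτ hBτ (by ring) hδ (hg₁ _ ?_)
      rw [add_sub_cancel_left]; linarith)
  refine ⟨x, hFx, ?_, fun y hy hFy => huniq y (hI.2 hy) hFy⟩
  rw [show s + ζ / 2 - c / 2 * τ = s + δ by rw [hδ_def]; ring, abs_sub_comm]
  exact mem_Icc_iff_abs_le.2 hx

theorem differentiableAt_slice {ε c Λ : ℝ} {L : ℝ → ℝ → ℝ}
    (hL : ContDiffOn ℝ 1 (fun p : ℝ × ℝ => L p.1 p.2) (Icc (-10 : ℝ) 10 ×ˢ Icc 0 ε))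
    (hL₁ : ∀ y τ : ℝ, |y| ≤ 10 → τ ∈ Icc (0 : ℝ) ε → |L y τ - c * y ^ 2 * τ| ≤ Λ * τ ^ 2)
    {y τ : ℝ} (hy : |y| < 10) (hτ : τ ∈ Ico 0 ε) : DifferentiableAt ℝ (fun y' => L y' τ) y := by
  obtain ⟨hy₁, hy₂⟩ := abs_lt.1 hy
  rcases hτ.1.eq_or_lt with rfl | hτ₀
  · have hL₀ : (fun y' => L y' 0) =ᶠ[𝓝 y] fun _ => 0 := by
      filter_upwards [Ioo_mem_nhds hy₁ hy₂] with y' hy'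
      simpa using hL₁ y' 0 (abs_le.2 ⟨hy'.1.le, hy'.2.le⟩) ⟨le_rfl, hτ.2.le⟩
    exact (differentiableAt_const 0).congr_of_eventuallyEq hL₀
  · exact differentiableAt_left_of_contDiffOn_prod hL one_ne_zero (Icc_mem_nhds hy₁ hy₂)
      (Icc_mem_nhds hτ₀ hτ.2)

theorem exists_unique_root_near_sign {M ε c B τ ζ s : ℝ} {L : ℝ → ℝ → ℝ}
    (hL : ContDiffOn ℝ 1 (fun p : ℝ × ℝ => L p.1 p.2) (Icc (-10 : ℝ) 10 ×ˢ Icc 0 ε))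
    (hL₁ : ∀ y τ : ℝ, |y| ≤ 10 → τ ∈ Icc (0 : ℝ) ε →
      |L y τ - c * y ^ 2 * τ| ≤ 2 * M ^ 3 * τ ^ 2)
    (hL₂ : ∀ y τ : ℝ, |y| ≤ 10 → τ ∈ Icc (0 : ℝ) ε →
      |deriv (fun y' => L y' τ) y - 2 * c * y * τ| ≤ 6 * M ^ 3 * τ ^ 2)
    (hs : |s| = 1) (hB : 1 + |c| + M ^ 4 + |M| ^ 3 ≤ B) (hτ : τ ∈ Ico 0 ε)
    (hBτ : B * τ ≤ 1 / 1000) (hζ : |ζ| ≤ M ^ 4 * τ) :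
    ∃ x, x ^ 3 - x + L x τ = ζ ∧ |x - (s + ζ / 2 - c / 2 * τ)| ≤ 8 * B ^ 2 * τ ^ 2 ∧
      ∀ y, |y - s| ≤ 1 / 10 → y ^ 3 - y + L y τ = ζ → y = x := by
  have hM₃ : M ^ 3 ≤ |M| ^ 3 := by rw [← abs_pow]; exact le_abs_self _
  have hM₄ : 0 ≤ M ^ 4 := by positivity
  have hM₀ : 0 ≤ |M| ^ 3 := by positivity
  have hc : 0 ≤ |c| := abs_nonneg c
  have hτ₀ : 0 ≤ τ := hτ.1
  have hy : ∀ y, |y - s| ≤ 1 / 10 → |y| < 10 := fun y hy => by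
    linarith [abs_sub_abs_le_abs_sub y s]
  have hτ' : τ ∈ Icc 0 ε := Ico_subset_Icc_self hτ
  refine exists_unique_root_cubic_add hs (by linarith) (by linarith) hτ₀ hBτ
    (hζ.trans (by gcongr; linarith)) (fun y hy' => differentiableAt_slice hL hL₁ (hy y hy') hτ)
    (fun y hy' => (hL₁ y τ (hy y hy').le hτ').trans (by gcongr; linarith))
    (fun y hy' => (hL₂ y τ (hy y hy').le hτ').trans (by gcongr; linarith))

theorem stmt6_general (M ε c : ℝ) (L : ℝ → ℝ → ℝ) (hε : 0 < ε)
    (hL : ContDiffOn ℝ 1 (fun p : ℝ × ℝ => L p.1 p.2)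
      (Set.Icc (-10 : ℝ) 10 ×ˢ Set.Icc 0 ε))
    (hL1 : ∀ y τ : ℝ, |y| ≤ 10 → τ ∈ Set.Icc (0:ℝ) ε →
      |L y τ - c * y ^ 2 * τ| ≤ 2 * M ^ 3 * τ ^ 2)
    (hL2 : ∀ y τ : ℝ, |y| ≤ 10 → τ ∈ Set.Icc (0:ℝ) ε →
      |deriv (fun y' => L y' τ) y - 2 * c * y * τ| ≤ 6 * M ^ 3 * τ ^ 2) :
    ∃ τ₀ > 0, ∃ C > 0, ∃ yp ym : ℝ → ℝ → ℝ,
      ∀ τ ∈ Set.Icc (0:ℝ) τ₀, ∀ ζ : ℝ, |ζ| ≤ M ^ 4 * τ →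
        ((yp ζ τ) ^ 3 - yp ζ τ + L (yp ζ τ) τ = ζ ∧
          |yp ζ τ - (1 + ζ / 2 - (c / 2) * τ)| ≤ C * τ ^ 2 ∧
          (∀ y : ℝ, |y - 1| ≤ 1 / 10 → y ^ 3 - y + L y τ = ζ → y = yp ζ τ)) ∧
        ((ym ζ τ) ^ 3 - ym ζ τ + L (ym ζ τ) τ = ζ ∧
          |ym ζ τ - (-1 + ζ / 2 - (c / 2) * τ)| ≤ C * τ ^ 2 ∧
          (∀ y : ℝ, |y + 1| ≤ 1 / 10 → y ^ 3 - y + L y τ = ζ → y = ym ζ τ)) := by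
  obtain ⟨B, hB⟩ : ∃ B, B = 1 + |c| + M ^ 4 + |M| ^ 3 := ⟨_, rfl⟩
  have hB₀ : 0 < B := by rw [hB]; positivity
  have hroot : ∀ s, |s| = 1 → ∀ ζ τ, τ ∈ Icc 0 (min (ε / 2) (1 / (1000 * B))) →
      |ζ| ≤ M ^ 4 * τ → ∃ x, x ^ 3 - x + L x τ = ζ ∧
        |x - (s + ζ / 2 - c / 2 * τ)| ≤ 8 * B ^ 2 * τ ^ 2 ∧
        ∀ y, |y - s| ≤ 1 / 10 → y ^ 3 - y + L y τ = ζ → y = x := by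
    intro s hs ζ τ ⟨hτ₀, hτ⟩ hζ
    have hτB : τ * (1000 * B) ≤ 1 := (le_div_iff₀ (by positivity)).1 (hτ.trans (min_le_right _ _))
    exact exists_unique_root_near_sign hL hL1 hL2 hs hB.ge
      ⟨hτ₀, by linarith [hτ.trans (min_le_left _ _)]⟩ (by linarith) hζ
  choose! yp hyp using hroot 1 abs_one
  choose! ym hym using hroot (-1) (by norm_num)
  refine ⟨_, lt_min (half_pos hε) (by positivity), _, by positivity, yp, ym,
    fun τ hτ ζ hζ => ⟨hyp ζ τ hτ hζ, ?_⟩⟩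
  simpa only [sub_neg_eq_add] using hym ζ τ hτ hζ

/-- Implicit-function-theorem step: for `|ζ| ≤ M⁴τ` and small `τ`, the perturbed
cubic equation `ζ = y³ - y + 𝓛(y,τ)` has exactly one solution `y₊` near `+1` and
one solution `y₋` near `-1`, with `y± = ±1 + ζ/2 - (c/2)τ + O(τ²)`. -/
theorem stmt6 (M ε c : ℝ) (L : ℝ → ℝ → ℝ) (hM : 1 < M) (hε : 0 < ε)
    (hsmall : M ^ 4 * ε < 1 / 100)
    (hL : ContDiffOn ℝ 1 (fun p : ℝ × ℝ => L p.1 p.2)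
      (Set.Icc (-10 : ℝ) 10 ×ˢ Set.Icc 0 ε))
    (hL1 : ∀ y τ : ℝ, |y| ≤ 10 → τ ∈ Set.Icc (0:ℝ) ε →
      |L y τ - c * y ^ 2 * τ| ≤ 2 * M ^ 3 * τ ^ 2)
    (hL2 : ∀ y τ : ℝ, |y| ≤ 10 → τ ∈ Set.Icc (0:ℝ) ε →
      |deriv (fun y' => L y' τ) y - 2 * c * y * τ| ≤ 6 * M ^ 3 * τ ^ 2)
    (hL3 : ∀ y τ : ℝ, |y| ≤ 10 → τ ∈ Set.Icc (0:ℝ) ε →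
      |deriv (fun τ' => L y τ') τ - c * y ^ 2| ≤ 8 * M ^ 3 * τ) :
    ∃ τ₀ > 0, ∃ C > 0, ∃ yp ym : ℝ → ℝ → ℝ,
      ∀ τ ∈ Set.Icc (0:ℝ) τ₀, ∀ ζ : ℝ, |ζ| ≤ M ^ 4 * τ →
        ((yp ζ τ) ^ 3 - yp ζ τ + L (yp ζ τ) τ = ζ ∧
          |yp ζ τ - (1 + ζ / 2 - (c / 2) * τ)| ≤ C * τ ^ 2 ∧
          (∀ y : ℝ, |y - 1| ≤ 1 / 10 → y ^ 3 - y + L y τ = ζ → y = yp ζ τ)) ∧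
        ((ym ζ τ) ^ 3 - ym ζ τ + L (ym ζ τ) τ = ζ ∧
          |ym ζ τ - (-1 + ζ / 2 - (c / 2) * τ)| ≤ C * τ ^ 2 ∧
          (∀ y : ℝ, |y + 1| ≤ 1 / 10 → y ^ 3 - y + L y τ = ζ → y = ym ζ τ)) :=
  stmt6_general M ε c L hε hL hL1 hL2
end

section
/- Suppose w'(β) satisfies |w'(β) + (1/3)β^{-2/3}| ≤ (2/3)|a₂| |β|^{-1/3} + M for |β| small, p ∈ [9/10, 11/10], and |β| ≥ (4/5)t^{3/2} + (5/8)|x - φ(t)|. Then |w'(β) / (1 + t p w'(β))| ≤ (4/3)(t³ + (x - φ(t))²)^{-1/3} for small t and |x - φ(t)|. -/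
/-!
With `s = |β|^{1/3}` and `|β| < (20(M+1))⁻³`, the error term is at most `s⁻²/12`, so
`|w'| ≤ (5/12) s⁻²`. The cusp condition gives `t ≤ (7/6) s²` and `t³ + z² ≤ ((7/5) s²)³`.
Hence `1 + t p w' ≥ 1 - (11/10)(7/6)(5/12) = 67/144`, the quotient is at most
`(60/67) s⁻² ≤ (20/21) s⁻² = (4/3) ((7/5) s²)⁻¹`, and the last factor is at most
`(t³ + z²)^{-1/3}`.
-/

lemma Real.rpow_neg_nat_div_three {x : ℝ} (hx : 0 ≤ x) (n : ℕ) :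
    x ^ (-(n : ℝ) / 3) = ((x ^ ((1 : ℝ) / 3)) ^ n)⁻¹ := by
  rw [← Real.rpow_natCast, ← Real.rpow_mul hx, ← Real.rpow_neg hx]
  ring_nf

lemma Real.rpow_one_third_pow_three {x : ℝ} (hx : 0 ≤ x) : (x ^ ((1 : ℝ) / 3)) ^ 3 = x := by
  rw [← Real.rpow_natCast, ← Real.rpow_mul hx]
  norm_num

lemma Real.inv_le_rpow_neg_one_third {x k : ℝ} (hx : 0 < x) (hk : 0 < k) (h : x ≤ k ^ 3) :
    k⁻¹ ≤ x ^ (-(1 : ℝ) / 3) := by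
  have hxk : x ^ ((1 : ℝ) / 3) ≤ k := by
    refine le_of_pow_le_pow_left₀ three_ne_zero hk.le ?_
    rwa [Real.rpow_one_third_pow_three hx.le]
  have e := Real.rpow_neg_nat_div_three hx.le 1
  rw [Nat.cast_one, pow_one] at e
  rw [e]
  exact inv_anti₀ (by positivity) hxk

lemma abs_le_of_abs_add_third_inv_sq_le {w a M s : ℝ} (hs : 0 < s) (ha : |a| * s ≤ 1 / 20)
    (hM : M * s ^ 2 ≤ 1 / 20)
    (h : |w + 1 / 3 * (s ^ 2)⁻¹| ≤ 2 / 3 * |a| * s⁻¹ + M) :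
    |w| ≤ 5 / 12 * (s ^ 2)⁻¹ := by
  have hs2 : 0 < s ^ 2 := by positivity
  have hrhs : 2 / 3 * |a| * s⁻¹ + M ≤ 1 / 12 * (s ^ 2)⁻¹ := by
    have e : 2 / 3 * |a| * s⁻¹ + M = (2 / 3 * (|a| * s) + M * s ^ 2) * (s ^ 2)⁻¹ := by
      field_simp
    rw [e]
    gcongr
    linarith
  have hw := abs_le.1 (h.trans hrhs)
  exact abs_le.2 ⟨by linarith, by linarith [inv_pos.2 hs2]⟩

lemma abs_div_one_add_mul_le {w t p s : ℝ} (hs : 0 < s) (ht : 0 ≤ t) (hp₀ : 0 ≤ p)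
    (hp₁ : p ≤ 11 / 10) (hw : |w| ≤ 5 / 12 * (s ^ 2)⁻¹) (hts : t ≤ 7 / 6 * s ^ 2) :
    |w / (1 + t * p * w)| ≤ 20 / 21 * (s ^ 2)⁻¹ := by
  have hs2 : 0 < s ^ 2 := by positivity
  have htw : t * |w| ≤ 35 / 72 := by
    calc t * |w| ≤ 7 / 6 * s ^ 2 * (5 / 12 * (s ^ 2)⁻¹) := by gcongr
      _ = 35 / 72 := by field_simp; norm_num
  have hden : 67 / 144 ≤ 1 + t * p * w := by
    have : |t * p * w| ≤ 77 / 144 := by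
      rw [abs_mul, abs_mul, abs_of_nonneg ht, abs_of_nonneg hp₀]
      nlinarith [abs_nonneg w]
    linarith [neg_abs_le (t * p * w)]
  rw [abs_div, abs_of_pos (a := 1 + t * p * w) (by linarith), div_le_iff₀ (by linarith)]
  calc |w| ≤ 5 / 12 * (s ^ 2)⁻¹ := hw
    _ ≤ 20 / 21 * (s ^ 2)⁻¹ * (67 / 144) := by linarith [inv_pos.2 hs2]
    _ ≤ 20 / 21 * (s ^ 2)⁻¹ * (1 + t * p * w) := by gcongr

lemma pow_three_le_of_cusp {t T z s : ℝ} (hT : T ^ 2 = t ^ 3) (hT₀ : 0 ≤ T)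
    (h : 4 / 5 * T + 5 / 8 * |z| ≤ s ^ 3) :
    t ^ 3 ≤ (7 / 6 * s ^ 2) ^ 3 ∧ t ^ 3 + z ^ 2 ≤ (7 / 5 * s ^ 2) ^ 3 := by
  have hsq : 16 / 25 * t ^ 3 + 25 / 64 * z ^ 2 ≤ (s ^ 3) ^ 2 := by
    rw [← hT, ← sq_abs z]
    nlinarith [abs_nonneg z]
  constructor <;> nlinarith [sq_nonneg z, sq_nonneg (s ^ 3)]

theorem stmt11_general (M a₂ : ℝ) (ha₂ : |a₂| ≤ M) :
    ∃ δ > 0, ∀ t β p w' z : ℝ, 0 < t → t < δ → |z| < δ → 0 < |β| → |β| < δ →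
      p ∈ Set.Icc (9/10 : ℝ) (11/10) →
      |w' + (1/3) * |β| ^ (-(2:ℝ)/3)| ≤ (2/3) * |a₂| * |β| ^ (-(1:ℝ)/3) + M →
      (4/5) * t ^ ((3:ℝ)/2) + (5/8) * |z| ≤ |β| →
      |w' / (1 + t * p * w')| ≤ (4/3) * (t ^ 3 + z ^ 2) ^ (-(1:ℝ)/3) := by
  have hM : 0 ≤ M := (abs_nonneg a₂).trans ha₂
  refine ⟨(20 * (M + 1))⁻¹ ^ 3, by positivity, ?_⟩
  intro t β p w' z ht _ _ hβ hβδ hp hw' hcone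
  set s := |β| ^ ((1 : ℝ) / 3)
  have hs : 0 < s := by positivity
  have hβs : |β| = s ^ 3 := (Real.rpow_one_third_pow_three hβ.le).symm
  have hsδ : (M + 1) * s ≤ 1 / 20 := by
    have : s ≤ (20 * (M + 1))⁻¹ :=
      le_of_pow_le_pow_left₀ three_ne_zero (by positivity) (hβs ▸ hβδ.le)
    calc (M + 1) * s ≤ (M + 1) * (20 * (M + 1))⁻¹ := by gcongr
      _ = 1 / 20 := by field_simp
  have hw : |w'| ≤ 5 / 12 * (s ^ 2)⁻¹ := by
    have e₁ := Real.rpow_neg_nat_div_three hβ.le 1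
    have e₂ := Real.rpow_neg_nat_div_three hβ.le 2
    rw [Nat.cast_one, pow_one] at e₁
    rw [Nat.cast_ofNat] at e₂
    rw [e₁, e₂] at hw'
    refine abs_le_of_abs_add_third_inv_sq_le hs ?_ ?_ hw'
    · nlinarith
    · nlinarith
  have hT : (t ^ ((3 : ℝ) / 2)) ^ 2 = t ^ 3 := by
    rw [← Real.rpow_natCast, ← Real.rpow_mul ht.le]
    norm_num
  obtain ⟨hts, htz⟩ := pow_three_le_of_cusp hT (by positivity) (hβs ▸ hcone)
  calc |w' / (1 + t * p * w')| ≤ 20 / 21 * (s ^ 2)⁻¹ :=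
        abs_div_one_add_mul_le hs ht.le (by linarith [hp.1]) hp.2 hw
          (le_of_pow_le_pow_left₀ three_ne_zero (by positivity) hts)
    _ = 4 / 3 * (7 / 5 * s ^ 2)⁻¹ := by field_simp; norm_num
    _ ≤ 4 / 3 * (t ^ 3 + z ^ 2) ^ (-(1 : ℝ) / 3) := by
        gcongr
        exact Real.inv_le_rpow_neg_one_third (by positivity) (by positivity) htz

/-- The spatial derivative estimate for the continued simple wave: if
`w'` is close to `-(1/3)|β|^{-2/3}` and `|β| ≥ (4/5)t^{3/2} + (5/8)|x - φ(t)|`,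
then `|w'/(1 + t p w')| ≤ (4/3)(t³ + (x - φ(t))²)^{-1/3}` for small `t` and
`|x - φ(t)|`. -/
theorem stmt11 (M a₂ : ℝ) (hM : 1 < M) (ha₂ : |a₂| ≤ M) :
    ∃ δ > 0, ∀ t β p w' z : ℝ, 0 < t → t < δ → |z| < δ → 0 < |β| → |β| < δ →
      p ∈ Set.Icc (9/10 : ℝ) (11/10) →
      |w' + (1/3) * |β| ^ (-(2:ℝ)/3)| ≤ (2/3) * |a₂| * |β| ^ (-(1:ℝ)/3) + M →
      (4/5) * t ^ ((3:ℝ)/2) + (5/8) * |z| ≤ |β| →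
      |w' / (1 + t * p * w')| ≤ (4/3) * (t ^ 3 + z ^ 2) ^ (-(1:ℝ)/3) :=
  stmt11_general M a₂ ha₂
end
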